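/- arXiv:1311.6716 — 3 statements merged into one kernel-verified Lean document; each statement's English description precedes it below -/
import Mathlib

section
/- With the setup of block monomials: if f̄ and ḡ are tuples of degree-≤p polynomials that are at Hamming distance at least αt̃, then the monomials m_{f̄}/m'_{f̄} and m_{ḡ}/m'_{ḡ} are at distance at least αt̃(t−3p), where m'_{f̄} selects the variables indexed by the 2p smallest elements of each block. -/
open scoped Classical

/-- The block of an index `i ∈ [n]`, where `[n]` is partitioned into `tt = n/t`
consecutive blocks of size `t`. -/
def blk {n t tt : ℕ} (h : n = tt * t) (ht : 0 < t) (i : Fin n) : Fin tt :=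
  ⟨(i : ℕ) / t, (Nat.div_lt_iff_lt_mul ht).2 (h ▸ i.isLt)⟩

/-- The set of variables of the reduced block monomial `m_{f̄}/m'_{f̄}`, where
`m'_{f̄}` selects the variables indexed by the `2p` smallest elements of each block
(those `i` with `i % t < 2p`). -/
noncomputable def redBlockVarSet {F : Type*} [Field F] {n t tt : ℕ} (p : ℕ)
    (h : n = tt * t) (ht : 0 < t) (e : Fin n ≃ F)
    (fbar : Fin tt → Polynomial F) : Finset (Fin n × F) :=
  (Finset.univ.filter (fun i : Fin n => 2 * p ≤ (i : ℕ) % t)).image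
    (fun i : Fin n => (i, (fbar (blk h ht i)).eval (e i)))

/-- Size of the "tail" of a block: indices in block `j` with residue `≥ 2p`. -/
lemma blk_tail_card {n t tt : ℕ} (h : n = tt * t) (ht : 0 < t) (p : ℕ) (hpt : 2 * p ≤ t)
    (j : Fin tt) :
    (Finset.univ.filter (fun i : Fin n => blk h ht i = j ∧ 2 * p ≤ (i : ℕ) % t)).card
      = t - 2 * p := by
  classical
  have := Finset.card_bij'
    (i := fun (i : Fin n) (_ : i ∈ Finset.univ.filter
        (fun i : Fin n => blk h ht i = j ∧ 2 * p ≤ (i : ℕ) % t)) => (i : ℕ) % t)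
    (j := fun (r : ℕ) (hr : r ∈ Finset.Ico (2 * p) t) =>
      (⟨(j : ℕ) * t + r, by
        have hr' : r < t := (Finset.mem_Ico.1 hr).2
        have hj : (j : ℕ) + 1 ≤ tt := j.isLt
        calc (j : ℕ) * t + r < (j : ℕ) * t + t := by omega
        _ = ((j : ℕ) + 1) * t := by ring
        _ ≤ tt * t := Nat.mul_le_mul_right t hj
        _ = n := h.symm⟩ : Fin n))
    (hi := ?_) (hj := ?_) (left_inv := ?_) (right_inv := ?_)
  · rw [this, Nat.card_Ico]
  · intro i hi
    simp only [Finset.mem_filter, Finset.mem_univ, true_and] at hi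
    exact Finset.mem_Ico.2 ⟨hi.2, Nat.mod_lt _ ht⟩
  · intro r hr
    have hr' := Finset.mem_Ico.1 hr
    have hmod : ((j : ℕ) * t + r) % t = r := by
      rw [Nat.mul_comm, Nat.mul_add_mod, Nat.mod_eq_of_lt hr'.2]
    have hdiv : ((j : ℕ) * t + r) / t = (j : ℕ) := by
      rw [Nat.mul_comm, Nat.mul_add_div ht, Nat.div_eq_of_lt hr'.2]; omega
    simp only [Finset.mem_filter, Finset.mem_univ, true_and]
    refine ⟨Fin.ext ?_, ?_⟩
    · show ((j : ℕ) * t + r) / t = (j : ℕ)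
      exact hdiv
    · show 2 * p ≤ ((j : ℕ) * t + r) % t
      rw [hmod]; exact hr'.1
  · intro i hi
    simp only [Finset.mem_filter, Finset.mem_univ, true_and] at hi
    apply Fin.ext
    have : (blk h ht i : ℕ) = (i : ℕ) / t := rfl
    simp only []
    rw [← hi.1]
    simp only [this]
    exact (Nat.div_add_mod' _ _)
  · intro r hr
    have hr' := Finset.mem_Ico.1 hr
    simp [Nat.mul_comm, Nat.mul_add_mod, Nat.mod_eq_of_lt hr'.2]

/-- If two tuples `f̄`, `ḡ` of degree-`≤ p` polynomials are at Hamming distance at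
least `α·tt`, then the reduced monomials `m_{f̄}/m'_{f̄}` and `m_{ḡ}/m'_{ḡ}` are at
distance at least `α·tt·(t - 3p)`. -/
theorem redBlockMonomial_dist
    {F : Type*} [Field F] {n t tt p : ℕ}
    (h : n = tt * t) (ht : 0 < t) (hpt : 3 * p < t) (e : Fin n ≃ F)
    (fbar gbar : Fin tt → Polynomial F)
    (hf : ∀ j, (fbar j).natDegree ≤ p) (hg : ∀ j, (gbar j).natDegree ≤ p)
    (α : ℝ) (hα0 : 0 < α) (hα1 : α < 1)
    (hdiff : α * tt ≤ ((Finset.univ.filter (fun j => fbar j ≠ gbar j)).card : ℝ)) :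
    α * tt * ((t : ℝ) - 3 * p) ≤
      (((redBlockVarSet p h ht e fbar) \ (redBlockVarSet p h ht e gbar)).card : ℝ) := by
  classical
  set Fv := fun i : Fin n => (fbar (blk h ht i)).eval (e i) with hFv
  set Gv := fun i : Fin n => (gbar (blk h ht i)).eval (e i) with hGv
  set S : Finset (Fin n) := Finset.univ.filter (fun i => 2 * p ≤ (i : ℕ) % t) with hS
  set D : Finset (Fin n) := S.filter (fun i => Fv i ≠ Gv i) with hD
  -- the symmetric difference is the image of D
  have hsd : (redBlockVarSet p h ht e fbar) \ (redBlockVarSet p h ht e gbar)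
      = D.image (fun i => (i, Fv i)) := by
    ext ⟨i, v⟩
    simp only [redBlockVarSet, Finset.mem_sdiff, Finset.mem_image, Finset.mem_filter,
      Finset.mem_univ, true_and, Prod.mk.injEq, hD, hS, hFv, hGv]
    constructor
    · rintro ⟨⟨i', hi', rfl, rfl⟩, hnot⟩
      exact ⟨i', ⟨hi', fun hc => hnot ⟨i', hi', rfl, hc.symm⟩⟩, rfl, rfl⟩
    · rintro ⟨i', ⟨hi', hne⟩, rfl, rfl⟩
      refine ⟨⟨i', hi', rfl, rfl⟩, ?_⟩
      rintro ⟨i'', hi'', rfl, hv⟩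
      exact hne hv.symm
  have hcard_img : ((redBlockVarSet p h ht e fbar) \ (redBlockVarSet p h ht e gbar)).card
      = D.card := by
    rw [hsd]
    exact Finset.card_image_of_injective _ (fun a b hab => congrArg Prod.fst hab)
  set J : Finset (Fin tt) := Finset.univ.filter (fun j => fbar j ≠ gbar j) with hJ
  -- fiberwise lower bound
  have hfiber : ∀ j ∈ J, t - 3 * p ≤ (D.filter (fun i => blk h ht i = j)).card := by
    intro j hj
    have hjne : fbar j ≠ gbar j := (Finset.mem_filter.1 hj).2
    set q : Polynomial F := fbar j - gbar j with hq
    have hq0 : q ≠ 0 := sub_ne_zero.2 hjne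
    have hqdeg : q.natDegree ≤ p :=
      le_trans (Polynomial.natDegree_sub_le _ _) (max_le (hf j) (hg j))
    set B : Finset (Fin n) :=
      Finset.univ.filter (fun i : Fin n => blk h ht i = j ∧ 2 * p ≤ (i : ℕ) % t) with hB
    have hBcard : B.card = t - 2 * p := blk_tail_card h ht p (by omega) j
    set R : Finset (Fin n) := B.filter (fun i => Fv i = Gv i) with hR
    have hRcard : R.card ≤ p := by
      have : R.card ≤ q.roots.toFinset.card := by
        apply Finset.card_le_card_of_injOn e
        · intro i hi
          simp only [hR, hB, Finset.mem_coe, Finset.mem_filter, Finset.mem_univ, true_and] at hi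
          rw [Finset.mem_coe, Multiset.mem_toFinset, Polynomial.mem_roots hq0]
          have : Fv i = Gv i := hi.2
          simp only [hFv, hGv, hi.1.1] at this
          simp [Polynomial.IsRoot, hq, Polynomial.eval_sub, this]
        · exact fun a _ b _ hab => e.injective hab
      calc R.card ≤ q.roots.toFinset.card := this
        _ ≤ Multiset.card q.roots := Multiset.toFinset_card_le _
        _ ≤ q.natDegree := Polynomial.card_roots' q
        _ ≤ p := hqdeg
    have hsub : B \ R ⊆ D.filter (fun i => blk h ht i = j) := by
      intro i hi
      rw [Finset.mem_sdiff] at hi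
      obtain ⟨hiB, hiR⟩ := hi
      have hiB' := hiB
      simp only [hB, Finset.mem_filter, Finset.mem_univ, true_and] at hiB'
      have hne : Fv i ≠ Gv i := fun hc => hiR (by simp [hR, hiB, hc])
      simp only [Finset.mem_filter, hD, hS, Finset.mem_univ, true_and]
      exact ⟨⟨hiB'.2, hne⟩, hiB'.1⟩
    have : t - 3 * p ≤ (B \ R).card := by
      have := Finset.le_card_sdiff R B
      have h1 : B.card - R.card ≤ (B \ R).card := this
      omega
    exact le_trans this (Finset.card_le_card hsub)
  -- sum over fibers
  have hDcard : J.card * (t - 3 * p) ≤ D.card := by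
    have hcover : ∀ i ∈ D, blk h ht i ∈ (Finset.univ : Finset (Fin tt)) :=
      fun i _ => Finset.mem_univ _
    rw [Finset.card_eq_sum_card_fiberwise hcover]
    calc J.card * (t - 3 * p) = ∑ _j ∈ J, (t - 3 * p) := by
          rw [Finset.sum_const, smul_eq_mul]
      _ ≤ ∑ j ∈ J, (D.filter (fun i => blk h ht i = j)).card :=
          Finset.sum_le_sum hfiber
      _ ≤ ∑ j : Fin tt, (D.filter (fun i => blk h ht i = j)).card :=
          Finset.sum_le_sum_of_subset (Finset.subset_univ J)
  -- put things together over ℝ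
  rw [hcard_img]
  have h3p : (3 : ℝ) * p ≤ t := by exact_mod_cast hpt.le
  have hcast : ((t - 3 * p : ℕ) : ℝ) = (t : ℝ) - 3 * p := by
    push_cast [Nat.cast_sub hpt.le]
    ring
  calc α * tt * ((t : ℝ) - 3 * p)
      ≤ (J.card : ℝ) * ((t : ℝ) - 3 * p) := by
        apply mul_le_mul_of_nonneg_right hdiff (by linarith)
    _ = ((J.card * (t - 3 * p) : ℕ) : ℝ) := by
        rw [Nat.cast_mul, hcast]
    _ ≤ (D.card : ℝ) := by exact_mod_cast hDcard
end

section
/- For the polynomial P = ∑_{f̄ ∈ S_p^{t̃}} m_{f̄} (sum over all t̃-tuples of degree-≤p univariate polynomials over F_n, with m_{f̄} the associated multilinear monomial), and for any fixed tuple f̄, the partial derivative of P with respect to the monomial m'_{f̄} equals the single monomial m_{f̄}/m'_{f̄}. -/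
open scoped Classical

/-- Evaluation of the degree-`≤ p` univariate polynomial with coefficient vector `c`
at the point `a`. -/
def evalPoly {F : Type*} [Field F] {p : ℕ} (c : Fin (p + 1) → F) (a : F) : F :=
  ∑ j, c j * a ^ (j : ℕ)

/-- The block monomial `m_{f̄} = ∏_{j ∈ [tt]} ∏_{i ∈ C_j} x_{i, f_j(i)}`, where the
tuple `f̄` of degree-`≤ p` polynomials is given by its coefficient vectors `c`. -/
noncomputable def blockMono {F : Type*} [Field F] {n t tt p : ℕ}
    (h : n = tt * t) (ht : 0 < t) (e : Fin n ≃ F)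
    (c : Fin tt → Fin (p + 1) → F) : MvPolynomial (Fin n × F) F :=
  ∏ i : Fin n, MvPolynomial.X (i, evalPoly (c (blk h ht i)) (e i))

/-- The variables of the sub-monomial `m'_{f̄}`, indexed by the `2p` smallest
elements of each block. -/
noncomputable def smallVarSet {F : Type*} [Field F] {n t tt p : ℕ}
    (h : n = tt * t) (ht : 0 < t) (e : Fin n ≃ F)
    (c : Fin tt → Fin (p + 1) → F) : Finset (Fin n × F) :=
  (Finset.univ.filter (fun i : Fin n => (i : ℕ) % t < 2 * p)).image
    (fun i : Fin n => (i, evalPoly (c (blk h ht i)) (e i)))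

/-- Differentiation with respect to the multilinear monomial with variable set `s`. -/
noncomputable def derivFinset {F : Type*} [Field F] {σ : Type*}
    (s : Finset σ) (q : MvPolynomial σ F) : MvPolynomial σ F :=
  s.toList.foldr (fun i r => MvPolynomial.pderiv i r) q

section Aux
open MvPolynomial

variable {F : Type*} [CommRing F] {σ : Type*}

lemma pderiv_prod_X (T : Finset σ) (u : σ) :
    pderiv u (∏ v ∈ T, (X v : MvPolynomial σ F)) =
      if u ∈ T then ∏ v ∈ T.erase u, (X v : MvPolynomial σ F) else 0 := by
  classical
  induction T using Finset.induction_on with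
  | empty => simp [pderiv_one]
  | @insert a T ha ih =>
    rw [Finset.prod_insert ha, pderiv_mul, ih]
    by_cases hu : u = a
    · subst hu
      simp [ha, Finset.erase_insert ha]
    · rw [pderiv_X_of_ne (Ne.symm hu)]
      by_cases hT : u ∈ T
      · rw [if_pos hT, if_pos (Finset.mem_insert_of_mem hT),
          Finset.erase_insert_of_ne (Ne.symm hu),
          Finset.prod_insert (fun hc => ha (Finset.mem_of_mem_erase hc))]
        ring
      · rw [if_neg hT, if_neg (by simp [hu, hT])]
        ring

lemma foldr_pderiv_prod_X (L : List σ) (hL : L.Nodup) (T : Finset σ) :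
    L.foldr (fun i r => pderiv i r) (∏ v ∈ T, (X v : MvPolynomial σ F)) =
      if ∀ x ∈ L, x ∈ T then ∏ v ∈ T \ L.toFinset, (X v : MvPolynomial σ F) else 0 := by
  classical
  induction L with
  | nil => simp
  | cons a L ih =>
    have hnd := List.nodup_cons.mp hL
    simp only [List.foldr_cons, ih hnd.2]
    by_cases hLT : ∀ x ∈ L, x ∈ T
    · rw [if_pos hLT, pderiv_prod_X]
      by_cases haT : a ∈ T
      · have ha' : a ∈ T \ L.toFinset :=
          Finset.mem_sdiff.mpr ⟨haT, by simpa using hnd.1⟩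
        rw [if_pos ha', if_pos (by intro x hx; rcases List.mem_cons.mp hx with rfl | hx
                                   exacts [haT, hLT x hx])]
        congr 1
        ext x
        simp only [Finset.mem_erase, Finset.mem_sdiff, List.toFinset_cons,
          Finset.mem_insert, List.mem_toFinset, not_or]
        tauto
      · have : a ∉ T \ L.toFinset := fun hc => haT (Finset.mem_sdiff.mp hc).1
        rw [if_neg this, if_neg (by intro hc; exact haT (hc a List.mem_cons_self))]
    · rw [if_neg hLT, map_zero, if_neg (by intro hc; exact hLT fun x hx => hc x (List.mem_cons_of_mem a hx))]

lemma foldr_pderiv_sum {α : Type*} (L : List σ) (A : Finset α) (q : α → MvPolynomial σ F) :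
    L.foldr (fun i r => pderiv i r) (∑ x ∈ A, q x) =
      ∑ x ∈ A, L.foldr (fun i r => pderiv i r) (q x) := by
  induction L with
  | nil => simp
  | cons a L ih => simp [List.foldr_cons, ih, map_sum]

end Aux

section Deriv
open MvPolynomial
variable {F : Type*} [Field F] {σ : Type*}

lemma derivFinset_sum {α : Type*} (s : Finset σ) (A : Finset α) (q : α → MvPolynomial σ F) :
    derivFinset s (∑ x ∈ A, q x) = ∑ x ∈ A, derivFinset s (q x) :=
  foldr_pderiv_sum _ _ _

lemma derivFinset_prod_X (s T : Finset σ) :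
    derivFinset s (∏ v ∈ T, (X v : MvPolynomial σ F)) =
      if s ⊆ T then ∏ v ∈ T \ s, (X v : MvPolynomial σ F) else 0 := by
  classical
  rw [derivFinset, foldr_pderiv_prod_X _ s.nodup_toList]
  have h1 : (∀ x ∈ s.toList, x ∈ T) ↔ s ⊆ T := by
    simp [Finset.subset_iff, Finset.mem_toList]
  rw [Finset.toList_toFinset]
  split_ifs with h2 h3 h3
  · rfl
  · exact absurd (h1.mp h2) h3
  · exact absurd (h1.mpr h3) h2
  · rfl

lemma coeff_vec_eq_of_agree {p : ℕ} (hp : 1 ≤ p)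
    (a b : Fin (p + 1) → F) (x : Fin (2 * p) → F) (hx : Function.Injective x)
    (hagree : ∀ r, evalPoly a (x r) = evalPoly b (x r)) : a = b := by
  classical
  set q : Polynomial F := ∑ k : Fin (p + 1), Polynomial.C (a k - b k) * Polynomial.X ^ (k : ℕ)
    with hqdef
  have hcoeff : ∀ k : Fin (p + 1), q.coeff k = a k - b k := by
    intro k
    rw [hqdef, Polynomial.finset_sum_coeff]
    rw [Finset.sum_eq_single k]
    · simp [Polynomial.coeff_X_pow, sub_mul]
    · intro m _ hm
      have : (k : ℕ) ≠ (m : ℕ) := fun hc => hm (Fin.ext hc.symm)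
      simp [Polynomial.coeff_X_pow, sub_mul, this]
    · simp
  have hdeg : q.natDegree ≤ p := by
    refine Polynomial.natDegree_sum_le_of_forall_le _ _ fun k _ => ?_
    refine le_trans (Polynomial.natDegree_C_mul_le _ _) ?_
    simpa [Polynomial.natDegree_X_pow] using Nat.lt_succ_iff.mp k.isLt
  have heval : ∀ r, q.eval (x r) = 0 := by
    intro r
    have := hagree r
    simp only [evalPoly] at this
    simp [hqdef, Polynomial.eval_finset_sum, sub_mul, Finset.sum_sub_distrib, this]
  have hq0 : q = 0 := by
    by_contra hq0
    have hroots : (Finset.univ.image x).val ≤ q.roots := by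
      rw [Multiset.le_iff_subset (Finset.univ.image x).nodup]
      intro y hy
      rcases Finset.mem_image.mp (Finset.mem_val.mp hy) with ⟨r, _, rfl⟩
      exact Polynomial.mem_roots'.mpr ⟨hq0, heval r⟩
    have h1 : 2 * p ≤ Multiset.card q.roots := by
      have := Multiset.card_le_card hroots
      rwa [Finset.card_val, Finset.card_image_of_injective _ hx, Finset.card_univ,
        Fintype.card_fin] at this
    have h2 := q.card_roots'
    omega
  funext k
  have := hcoeff k
  rw [hq0] at this
  simp only [Polynomial.coeff_zero] at this
  exact sub_eq_zero.mp this.symm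

end Deriv

/-- For the polynomial `P = ∑_{f̄} m_{f̄}` (sum over all `tt`-tuples of degree-`≤ p`
univariate polynomials over the finite field `F` of size `n`) and any fixed tuple
`f̄`, the partial derivative of `P` with respect to `m'_{f̄}` is exactly the single
monomial `m_{f̄}/m'_{f̄}`. -/
theorem deriv_blockPoly_eq_single_monomial
    {F : Type*} [Field F] [Fintype F] {n t tt p : ℕ}
    (h : n = tt * t) (ht : 0 < t) (hp : 1 ≤ p) (h2p : 2 * p < t)
    (hF : Fintype.card F = n) (e : Fin n ≃ F)
    (c : Fin tt → Fin (p + 1) → F) :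
    derivFinset (smallVarSet h ht e c)
        (∑ c' : Fin tt → Fin (p + 1) → F, blockMono h ht e c') =
      ∏ i ∈ Finset.univ.filter (fun i : Fin n => 2 * p ≤ (i : ℕ) % t),
        MvPolynomial.X (i, evalPoly (c (blk h ht i)) (e i)) := by
  classical
  set f : (Fin tt → Fin (p + 1) → F) → Fin n → Fin n × F :=
    fun c' i => (i, evalPoly (c' (blk h ht i)) (e i)) with hf
  have hinj : ∀ c', Function.Injective (f c') := fun c' i i' hii =>
    congrArg Prod.fst hii
  have hmono : ∀ c', blockMono h ht e c' =
      ∏ v ∈ Finset.univ.image (f c'), MvPolynomial.X v := by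
    intro c'
    rw [Finset.prod_image (fun i _ j _ hij => hinj c' hij)]
    rfl
  have hS : smallVarSet h ht e c =
      (Finset.univ.filter (fun i : Fin n => (i : ℕ) % t < 2 * p)).image (f c) := rfl
  have hidx : ∀ (j : Fin tt) (r : Fin (2 * p)), (j : ℕ) * t + (r : ℕ) < n := by
    intro j r
    have h1 : (r : ℕ) < t := lt_trans r.isLt h2p
    have h2 : ((j : ℕ) + 1) * t ≤ tt * t := Nat.mul_le_mul_right t j.isLt
    have h3 : (j : ℕ) * t + (r : ℕ) < ((j : ℕ) + 1) * t := by
      rw [add_mul, one_mul]; omega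
    omega
  have hsubset : ∀ c', smallVarSet h ht e c ⊆ Finset.univ.image (f c') → c' = c := by
    intro c' hsub
    funext j
    set idx : Fin (2 * p) → Fin n := fun r => ⟨(j : ℕ) * t + (r : ℕ), hidx j r⟩ with hidxdef
    have hrt : ∀ r : Fin (2 * p), (r : ℕ) < t := fun r => lt_trans r.isLt h2p
    have hblk : ∀ r, blk h ht (idx r) = j := by
      intro r
      apply Fin.ext
      show ((j : ℕ) * t + (r : ℕ)) / t = j
      rw [mul_comm, Nat.mul_add_div ht, Nat.div_eq_of_lt (hrt r), add_zero]
    have hmod : ∀ r : Fin (2 * p), ((idx r : Fin n) : ℕ) % t < 2 * p := by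
      intro r
      show ((j : ℕ) * t + (r : ℕ)) % t < 2 * p
      rw [mul_comm, Nat.mul_add_mod, Nat.mod_eq_of_lt (hrt r)]
      exact r.isLt
    have hidxinj : Function.Injective (fun r : Fin (2 * p) => e (idx r)) := by
      intro r r' hrr
      have h1 : idx r = idx r' := e.injective hrr
      have h2 : (j : ℕ) * t + (r : ℕ) = (j : ℕ) * t + (r' : ℕ) := congrArg Fin.val h1
      exact Fin.ext (Nat.add_left_cancel h2)
    have hagree : ∀ r, evalPoly (c' j) (e (idx r)) = evalPoly (c j) (e (idx r)) := by
      intro r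
      have hmem : f c (idx r) ∈ Finset.univ.image (f c') := by
        apply hsub
        rw [hS]
        exact Finset.mem_image_of_mem _
          (Finset.mem_filter.mpr ⟨Finset.mem_univ _, hmod r⟩)
      rcases Finset.mem_image.mp hmem with ⟨i', _, hi'⟩
      have h1 : i' = idx r := congrArg Prod.fst hi'
      subst h1
      have h2 := congrArg Prod.snd hi'
      simp only [hf, hblk r] at h2
      exact h2
    exact coeff_vec_eq_of_agree hp (c' j) (c j) (fun r => e (idx r)) hidxinj hagree
  have hterm : ∀ c', derivFinset (smallVarSet h ht e c) (blockMono h ht e c') =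
      if smallVarSet h ht e c ⊆ Finset.univ.image (f c')
        then ∏ v ∈ Finset.univ.image (f c') \ smallVarSet h ht e c, MvPolynomial.X v
        else 0 := by
    intro c'
    rw [hmono c', derivFinset_prod_X]
    congr!
  rw [derivFinset_sum, Finset.sum_congr rfl fun c' _ => hterm c', Finset.sum_eq_single c]
  · rw [if_pos (hS ▸ Finset.image_subset_image (Finset.filter_subset _ _))]
    have hdiff : Finset.univ.image (f c) \ smallVarSet h ht e c =
        (Finset.univ.filter (fun i : Fin n => 2 * p ≤ (i : ℕ) % t)).image (f c) := by
      rw [hS, ← Finset.image_sdiff _ _ (hinj c)]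
      congr 1
      ext i
      simp [not_lt]
    rw [hdiff, Finset.prod_image (fun i _ j _ hij => hinj c hij)]
  · intro c' _ hne
    exact if_neg fun hc => hne (hsubset c' hc)
  · intro hc
    exact absurd (Finset.mem_univ c) hc
end

section
/- There exists a set of at least n^{(1-α)(p+1)·t̃} multilinear monomials, each of degree n − 2p·t̃, such that any two are at pairwise distance at least αt̃(t−3p). -/
open scoped Classical

lemma aux_roots_bound {F : Type*} [Field F] {k m : ℕ} (a : Fin k → F)
    (ha : a ≠ 0) (g : Fin m → F) (hg : Function.Injective g) :
    (Finset.univ.filter fun b : Fin m => ∑ l : Fin k, a l * g b ^ (l : ℕ) = 0).card ≤ k - 1 := by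
  classical
  set P : Polynomial F := ∑ l : Fin k, Polynomial.monomial (l : ℕ) (a l) with hP
  have hPeval : ∀ x, P.eval x = ∑ l : Fin k, a l * x ^ (l : ℕ) := by
    intro x
    simp [hP, Polynomial.eval_finset_sum, Polynomial.eval_monomial, mul_comm]
  obtain ⟨l, hl⟩ : ∃ l, a l ≠ 0 := by
    by_contra hc
    push_neg at hc
    exact ha (funext fun l => hc l)
  have hcoeff : P.coeff (l : ℕ) = a l := by
    rw [hP, Polynomial.finset_sum_coeff]
    simp [Polynomial.coeff_monomial, Fin.val_eq_val]
  have hP0 : P ≠ 0 := fun h0 => hl (by rw [← hcoeff, h0, Polynomial.coeff_zero])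
  have hdeg : P.natDegree ≤ k - 1 := by
    apply Polynomial.natDegree_sum_le_of_forall_le
    intro i _
    exact le_trans (Polynomial.natDegree_monomial_le (a i)) (Nat.le_sub_one_of_lt i.isLt)
  calc (Finset.univ.filter fun b : Fin m => ∑ l : Fin k, a l * g b ^ (l : ℕ) = 0).card
      ≤ P.roots.toFinset.card := by
        apply Finset.card_le_card_of_injOn g
        · intro b hb
          simp only [Finset.mem_coe, Finset.mem_filter] at hb ⊢
          rw [Multiset.mem_toFinset, Polynomial.mem_roots hP0]
          exact (by rw [Polynomial.IsRoot, hPeval]; exact hb.2)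
        · exact fun x _ y _ hxy => hg hxy
    _ ≤ P.roots.card := P.roots.toFinset_card_le
    _ ≤ P.natDegree := P.card_roots'
    _ ≤ k - 1 := hdeg

/-- There is a family of at least `n^{(1-α)(p+1)·tt}` multilinear monomials (given by
their variable sets over the variables `x_{i,a}`, `i ∈ [n]`, `a ∈ F`), each of degree
`n - 2p·tt`, such that any two distinct members are at distance at least
`α·tt·(t - 3p)`. -/
theorem exists_far_apart_monomials
    {F : Type*} [Field F] [Fintype F] {n t tt p : ℕ}
    (h : n = tt * t) (ht : 0 < tt) (hpt : 3 * p < t) (hp : 0 < p)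
    (hF : Fintype.card F = n) (e : Fin n ≃ F)
    (htt : tt < n ^ (p + 1))
    (α : ℝ) (hα0 : 0 < α) (hα1 : α < 1) :
    ∃ M : Finset (Finset (Fin n × F)),
      (n ^ (p + 1)) ^ (⌈(1 - α) * tt⌉₊) ≤ M.card ∧
      (∀ s ∈ M, s.card = n - 2 * p * tt) ∧
      ∀ s ∈ M, ∀ s' ∈ M, s ≠ s' →
        α * tt * ((t : ℝ) - 3 * p) ≤ ((s \ s').card : ℝ) := by
  classical
  set k := ⌈(1 - α) * (tt : ℝ)⌉₊ with hk
  have h2pt : 2 * p ≤ t := by omega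
  have httn : tt ≤ n := by
    rw [h]; exact Nat.le_mul_of_pos_right tt (by omega)
  -- block structure
  set d : Fin tt × Fin t ≃ Fin n := finProdFinEquiv.trans (finCongr h.symm) with hd
  set ι : Fin tt × Fin (t - 2*p) → Fin n :=
    fun x => d (x.1, Fin.castLE (Nat.sub_le t (2*p)) x.2) with hιdef
  have hι : Function.Injective ι := by
    intro x y hxy
    have h1 := d.injective hxy
    rw [Prod.mk.injEq] at h1
    exact Prod.ext h1.1 (Fin.castLE_injective _ h1.2)
  set β : Fin tt → F := fun b => e (Fin.castLE httn b) with hβdef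
  have hβ : Function.Injective β := by
    intro x y hxy
    exact Fin.castLE_injective _ (e.injective hxy)
  set γ : Fin tt × Fin (t - 2*p) → F := fun x => e (ι x) with hγdef
  set c : (Fin (p+1) → Fin k → F) → Fin tt → Fin (p+1) → F :=
    fun m b j => ∑ l : Fin k, m j l * β b ^ (l : ℕ) with hcdef
  set f : (Fin (p+1) → Fin k → F) → Fin tt × Fin (t - 2*p) → F :=
    fun m x => ∑ j : Fin (p+1), c m x.1 j * γ x ^ (j : ℕ) with hfdef
  set enc : (Fin (p+1) → Fin k → F) → Finset (Fin n × F) :=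
    fun m => Finset.image (fun x => (ι x, f m x)) Finset.univ with hencdef
  have hpair : ∀ m, Function.Injective (fun x => (ι x, f m x)) := by
    intro m x y hxy
    exact hι (Prod.ext_iff.mp hxy).1
  -- numeric facts about k
  have hk1 : 0 < k := by
    rw [hk]
    exact Nat.ceil_pos.mpr (mul_pos (by linarith) (by exact_mod_cast ht))
  have hklt : ((k - 1 : ℕ) : ℝ) < (1 - α) * tt := by
    refine Nat.lt_ceil.mp ?_
    rw [← hk]
    exact Nat.sub_lt hk1 one_pos
  have hktt : k - 1 < tt := by
    have h2 : ((k - 1 : ℕ) : ℝ) < (tt : ℝ) := by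
      have htt0 : (0 : ℝ) < tt := by exact_mod_cast ht
      nlinarith
    exact_mod_cast h2
  -- key distance bound
  have key : ∀ m m', m ≠ m' →
      (tt - (k - 1)) * (t - 3*p) ≤ ((enc m \ enc m').card) := by
    intro m m' hne
    -- Step A: few blocks agree
    have stepA : (Finset.univ.filter fun b : Fin tt => c m b = c m' b).card ≤ k - 1 := by
      obtain ⟨j, hj⟩ : ∃ j, m j ≠ m' j := by
        by_contra hc; push_neg at hc; exact hne (funext hc)
      have hroots := aux_roots_bound (fun l => m j l - m' j l)
        (fun h0 => hj (funext fun l => sub_eq_zero.mp (congrFun h0 l))) β hβ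
      refine le_trans (Finset.card_le_card ?_) hroots
      intro b hb
      simp only [Finset.mem_filter, Finset.mem_univ, true_and] at hb ⊢
      have hbj := congrFun hb j
      simp only [hcdef] at hbj
      calc ∑ l : Fin k, (m j l - m' j l) * β b ^ (l : ℕ)
          = (∑ l : Fin k, m j l * β b ^ (l : ℕ)) - ∑ l : Fin k, m' j l * β b ^ (l : ℕ) := by
            rw [← Finset.sum_sub_distrib]; congr 1; ext l; ring
        _ = 0 := by rw [hbj]; ring
    have hDcard : tt - (k - 1) ≤ (Finset.univ.filter fun b : Fin tt => ¬ (c m b = c m' b)).card := by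
      have hsplit := Finset.card_filter_add_card_filter_not
        (s := (Finset.univ : Finset (Fin tt))) (p := fun b => c m b = c m' b)
      have huniv : (Finset.univ : Finset (Fin tt)).card = tt := by simp
      omega
    -- Step B: within a differing block, many coordinates differ
    have stepB : ∀ b : Fin tt, c m b ≠ c m' b →
        t - 3*p ≤ (Finset.univ.filter fun j : Fin (t - 2*p) => ¬ (f m (b, j) = f m' (b, j))).card := by
      intro b hb
      have hγb : Function.Injective (fun j : Fin (t - 2*p) => γ (b, j)) := by
        intro x y hxy
        have h2 := hι (e.injective hxy)
        exact (Prod.ext_iff.mp h2).2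
      have hroots := aux_roots_bound (fun jj : Fin (p+1) => c m b jj - c m' b jj)
        (fun h0 => hb (funext fun jj => sub_eq_zero.mp (congrFun h0 jj)))
        (fun j : Fin (t - 2*p) => γ (b, j)) hγb
      have hsub : (Finset.univ.filter fun j : Fin (t - 2*p) => f m (b, j) = f m' (b, j)).card
          ≤ (p + 1) - 1 := by
        refine le_trans (Finset.card_le_card ?_) hroots
        intro j hj
        simp only [Finset.mem_filter, Finset.mem_univ, true_and] at hj ⊢
        calc ∑ jj : Fin (p+1), (c m b jj - c m' b jj) * γ (b, j) ^ (jj : ℕ)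
            = f m (b, j) - f m' (b, j) := by
              simp only [hfdef]
              rw [← Finset.sum_sub_distrib]; congr 1; ext jj; ring
          _ = 0 := by rw [hj]; ring
      have hsplit := Finset.card_filter_add_card_filter_not
        (s := (Finset.univ : Finset (Fin (t - 2*p)))) (p := fun j => f m (b, j) = f m' (b, j))
      have huniv : (Finset.univ : Finset (Fin (t - 2*p))).card = t - 2*p := by simp
      omega
    -- assemble: biUnion of per-block differing coordinates
    set D := (Finset.univ.filter fun b : Fin tt => ¬ (c m b = c m' b)) with hD
    set T : Finset (Fin tt × Fin (t - 2*p)) := D.biUnion (fun b =>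
      (Finset.univ.filter fun j : Fin (t - 2*p) => ¬ (f m (b, j) = f m' (b, j))).image
        (fun j => (b, j))) with hT
    have hTcard : (tt - (k - 1)) * (t - 3*p) ≤ T.card := by
      rw [hT, Finset.card_biUnion]
      · calc (tt - (k - 1)) * (t - 3*p)
            ≤ D.card * (t - 3*p) := Nat.mul_le_mul_right _ hDcard
          _ = ∑ _b ∈ D, (t - 3*p) := by rw [Finset.sum_const, smul_eq_mul]
          _ ≤ ∑ b ∈ D, ((Finset.univ.filter fun j : Fin (t - 2*p) =>
                ¬ (f m (b, j) = f m' (b, j))).image (fun j => (b, j))).card := by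
              refine Finset.sum_le_sum ?_
              intro b hb
              rw [Finset.card_image_of_injective _ (fun x y hxy => congrArg Prod.snd hxy)]
              exact stepB b (by simpa [hD] using hb)
      · intro b1 _ b2 _ hne12
        refine Finset.disjoint_left.mpr ?_
        intro x hx1 hx2
        simp only [Finset.mem_image] at hx1 hx2
        obtain ⟨j1, _, rfl⟩ := hx1
        obtain ⟨j2, _, hj2⟩ := hx2
        exact hne12 (congrArg Prod.fst hj2).symm
    have hTsub : ∀ x ∈ T, ¬ (f m x = f m' x) := by
      intro x hx
      simp only [hT, Finset.mem_biUnion, Finset.mem_image] at hx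
      obtain ⟨b, _, j, hj, rfl⟩ := hx
      simpa using (Finset.mem_filter.mp hj).2
    -- map T into enc m \ enc m'
    have himg : T.image (fun x => (ι x, f m x)) ⊆ enc m \ enc m' := by
      intro y hy
      simp only [Finset.mem_image] at hy
      obtain ⟨x, hx, rfl⟩ := hy
      rw [Finset.mem_sdiff]
      constructor
      · simp only [hencdef, Finset.mem_image]
        exact ⟨x, Finset.mem_univ x, rfl⟩
      · simp only [hencdef, Finset.mem_image]
        rintro ⟨z, -, hz⟩
        have h1 : ι z = ι x := (Prod.ext_iff.mp hz).1
        have h2 : f m' z = f m x := (Prod.ext_iff.mp hz).2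
        rw [hι h1] at h2
        exact hTsub x hx h2.symm
    calc (tt - (k - 1)) * (t - 3*p) ≤ T.card := hTcard
      _ = (T.image (fun x => (ι x, f m x))).card :=
          (Finset.card_image_of_injective _ (hpair m)).symm
      _ ≤ (enc m \ enc m').card := Finset.card_le_card himg
  -- positivity gives injectivity of enc
  have hpos : 0 < (tt - (k - 1)) * (t - 3*p) :=
    Nat.mul_pos (by omega) (by omega)
  have henc_inj : Function.Injective enc := by
    intro m m' hmm
    by_contra hne
    have hkey := key m m' hne
    rw [hmm, Finset.sdiff_self] at hkey
    simp at hkey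
    omega
  refine ⟨Finset.image enc Finset.univ, ?_, ?_, ?_⟩
  · rw [Finset.card_image_of_injective _ henc_inj, Finset.card_univ]
    have hcard : Fintype.card (Fin (p+1) → Fin k → F) = (n ^ (p+1)) ^ k := by
      simp only [Fintype.card_fun, Fintype.card_fin, hF]
      rw [← pow_mul, ← pow_mul, mul_comm]
    rw [hcard]
  · rintro s hs
    simp only [Finset.mem_image] at hs
    obtain ⟨m, -, rfl⟩ := hs
    rw [hencdef]
    rw [Finset.card_image_of_injective _ (hpair m), Finset.card_univ]
    simp only [Fintype.card_prod, Fintype.card_fin]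
    have hmul : tt * (t - 2*p) + tt * (2*p) = n := by
      rw [← Nat.mul_add, Nat.sub_add_cancel h2pt, ← h]
    have hcomm : tt * (2*p) = 2 * p * tt := Nat.mul_comm _ _
    omega
  · rintro s hs s' hs' hne
    simp only [Finset.mem_image] at hs hs'
    obtain ⟨m, -, rfl⟩ := hs
    obtain ⟨m', -, rfl⟩ := hs'
    have hmm : m ≠ m' := fun hmm => hne (by rw [hmm])
    have hkey := key m m' hmm
    have hcast2 : (((tt - (k - 1)) * (t - 3*p) : ℕ) : ℝ) ≤ ((enc m \ enc m').card : ℝ) := by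
      exact_mod_cast hkey
    refine le_trans ?_ hcast2
    push_cast [Nat.cast_sub hktt.le, Nat.cast_sub (by omega : 3*p ≤ t)]
    have htt0 : (0 : ℝ) ≤ tt := by positivity
    have h3p : 3 * (p:ℝ) ≤ t := by exact_mod_cast (by omega : 3*p ≤ t)
    nlinarith [mul_le_mul_of_nonneg_right (le_of_lt hklt)
      (by linarith : (0:ℝ) ≤ (t:ℝ) - 3*p)]
end
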